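/- arXiv:2004.02528 — 2 statements merged into one kernel-verified Lean document; each statement's English description precedes it below -/
import Mathlib

section
/- Let ψ : ℝⁿ → ℝ be a C² function with |∇ψ| < 1 everywhere whose graph in ℝ^{n+1}_1 has constant mean curvature H. If 1/√(1-|∇ψ|²) = o(r) as r = |u| → ∞, then H = 0. -/
/-!
Put `X = ∇ψ / √(1 - |∇ψ|²)`, so that `div X = nH` and `|X| ≤ 1 / √(1 - |∇ψ|²) = o(|u|)`.
By the divergence theorem on the cube `[-R, R]ⁿ`, `(2R)ⁿ n H` is the flux of `X` through the
boundary, which is at most `2n (2R)ⁿ⁻¹ max |X| = (2R)ⁿ⁻¹ o(R)`. Hence `H = o(1)` as `R → ∞`.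
-/

open MeasureTheory Metric
open scoped ENNReal

/-- Divergence of a vector field on Euclidean space: trace of the total derivative. -/
noncomputable def vdiv {n : ℕ} (X : EuclideanSpace ℝ (Fin n) → EuclideanSpace ℝ (Fin n))
    (u : EuclideanSpace ℝ (Fin n)) : ℝ :=
  LinearMap.trace ℝ (EuclideanSpace ℝ (Fin n)) (fderiv ℝ X u).toLinearMap

open Set Filter Asymptotics

theorem Asymptotics.IsLittleO.exists_norm_le_mul_norm_add {α E F : Type*} [TopologicalSpace α]
    [SeminormedAddCommGroup E] [SeminormedAddCommGroup F] {f : α → E} {g : α → F}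
    (hf : Continuous f) (hfg : f =o[cocompact α] g) {ε : ℝ} (hε : 0 < ε) :
    ∃ C, ∀ x, ‖f x‖ ≤ ε * ‖g x‖ + C := by
  obtain ⟨K, hK, hKfg⟩ := mem_cocompact.1 (hfg.def hε)
  obtain ⟨C, hC⟩ := hK.exists_bound_of_continuousOn hf.continuousOn
  refine ⟨max C 0, fun x => ?_⟩
  by_cases hx : x ∈ K
  · nlinarith [hC x hx, le_max_left C 0, norm_nonneg (g x)]
  · have hx' : ‖f x‖ ≤ ε * ‖g x‖ := hKfg hx
    linarith [le_max_right C 0]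

theorem LinearMap.trace_eq_sum_apply_single {n : ℕ} (A : (Fin n → ℝ) →ₗ[ℝ] (Fin n → ℝ)) :
    LinearMap.trace ℝ _ A = ∑ i, A (Pi.single i 1) i := by
  rw [LinearMap.trace_eq_matrix_trace ℝ (Pi.basisFun ℝ (Fin n)), LinearMap.toMatrix_eq_toMatrix']
  simp [Matrix.trace, LinearMap.toMatrix'_apply]

theorem measureReal_Icc_neg_const_const {ι : Type*} [Fintype ι] {R : ℝ} (hR : 0 ≤ R) :
    volume.real (Icc (fun _ : ι => -R) fun _ => R) = (2 * R) ^ Fintype.card ι := by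
  rw [measureReal_def, Real.volume_Icc_pi_toReal (fun _ => by linarith)]
  simp only [sub_neg_eq_add, Finset.prod_const, Finset.card_univ]
  ring

theorem closedBall_zero_eq_Icc_pi {ι : Type*} [Fintype ι] {R : ℝ} (hR : 0 ≤ R) :
    closedBall (0 : ι → ℝ) R = Icc (fun _ => -R) fun _ => R := by
  rw [closedBall_pi _ hR, ← pi_univ_Icc]
  simp [Real.closedBall_eq_Icc]

/-- By the divergence theorem the flux of `Y` through the boundary of the cube `[-R, R]ⁿ⁺¹` is
`(2R)ⁿ⁺¹ c`; each of its `2 (n + 1)` faces contributes at most `(2R)ⁿ B`. -/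
theorem mul_abs_le_of_trace_fderiv_eq {n : ℕ} {Y : (Fin (n + 1) → ℝ) → (Fin (n + 1) → ℝ)}
    {c R B : ℝ} (hY : Differentiable ℝ Y)
    (hdiv : ∀ x, LinearMap.trace ℝ _ (fderiv ℝ Y x).toLinearMap = c)
    (hR : 0 < R) (hB : ∀ x ∈ closedBall 0 R, ‖Y x‖ ≤ B) :
    R * |c| ≤ (n + 1) * B := by
  set a : Fin (n + 1) → ℝ := fun _ => -R
  set b : Fin (n + 1) → ℝ := fun _ => R
  rw [closedBall_zero_eq_Icc_pi hR.le] at hB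
  have hab : a ≤ b := fun _ => by simp only [a, b]; linarith
  have hdiv' : (fun x => ∑ i, fderiv ℝ Y x (Pi.single i 1) i) = fun _ => c :=
    funext fun x => (LinearMap.trace_eq_sum_apply_single _).symm.trans (hdiv x)
  have hflux := integral_divergence_of_hasFDerivAt_off_countable a b hab Y (fderiv ℝ Y) ∅
    countable_empty hY.continuous.continuousOn (fun x _ => (hY x).hasFDerivAt)
    (by rw [hdiv']; exact integrableOn_const (by simp [a, b, Real.volume_Icc_pi]))
  rw [hdiv', setIntegral_const, measureReal_Icc_neg_const_const hR.le, Fintype.card_fin,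
    smul_eq_mul] at hflux
  have hface : ∀ i : Fin (n + 1), ∀ t ∈ Icc (-R) R,
      ‖∫ x in Icc (a ∘ i.succAbove) (b ∘ i.succAbove), Y (i.insertNth t x) i‖
        ≤ B * (2 * R) ^ n := by
    intro i t ht
    have hbound : ∀ x ∈ Icc (a ∘ i.succAbove) (b ∘ i.succAbove),
        ‖Y (i.insertNth t x) i‖ ≤ B := fun x hx =>
      (norm_le_pi_norm _ i).trans (hB _ (Fin.insertNth_mem_Icc.2 ⟨ht, hx⟩))
    have hvol : volume.real (Icc (a ∘ i.succAbove) (b ∘ i.succAbove)) = (2 * R) ^ n :=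
      (measureReal_Icc_neg_const_const hR.le).trans (by rw [Fintype.card_fin])
    rw [← hvol]
    exact norm_setIntegral_le_of_norm_le_const (by simp [a, b, Real.volume_Icc_pi]) hbound
  have hsum : (2 * R) ^ (n + 1) * |c| ≤ (n + 1) * (2 * (B * (2 * R) ^ n)) := by
    calc (2 * R) ^ (n + 1) * |c| = |(2 * R) ^ (n + 1) * c| := by
          rw [abs_mul, abs_of_pos (by positivity : (0 : ℝ) < (2 * R) ^ (n + 1))]
      _ ≤ ∑ i : Fin (n + 1), 2 * (B * (2 * R) ^ n) := by
          rw [hflux]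
          refine (Finset.abs_sum_le_sum_abs _ _).trans (Finset.sum_le_sum fun i _ => ?_)
          refine (abs_sub _ _).trans ?_
          have hb := hface i R ⟨by linarith, le_rfl⟩
          have ha := hface i (-R) ⟨le_rfl, by linarith⟩
          rw [Real.norm_eq_abs] at ha hb
          linarith
      _ = (n + 1) * (2 * (B * (2 * R) ^ n)) := by simp
  have h2R : 0 < (2 * R) ^ n := by positivity
  rw [pow_succ] at hsum
  nlinarith

theorem le_of_forall_pos_mul_le_mul_add {a b d : ℝ} (h : ∀ R > 0, R * a ≤ R * b + d) :
    a ≤ b := by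
  by_contra! hba
  have hR : (|d| + 1) / (a - b) * (a - b) = |d| + 1 := div_mul_cancel₀ _ (sub_pos.2 hba).ne'
  have := h ((|d| + 1) / (a - b)) (div_pos (by positivity) (sub_pos.2 hba))
  linarith [le_abs_self d]

theorem trace_fderiv_eq_zero_of_isLittleO_pi {n : ℕ} {Y : (Fin n → ℝ) → (Fin n → ℝ)} {c : ℝ}
    (hY : Differentiable ℝ Y) (hdiv : ∀ x, LinearMap.trace ℝ _ (fderiv ℝ Y x).toLinearMap = c)
    (hgrow : Y =o[cocompact _] fun x => ‖x‖) : c = 0 := by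
  cases n with
  | zero => simp [← hdiv 0, LinearMap.trace_eq_sum_apply_single]
  | succ n =>
    have key : ∀ ε > 0, |c| ≤ (n + 1) * ε := by
      intro ε hε
      obtain ⟨C, hC⟩ := hgrow.exists_norm_le_mul_norm_add hY.continuous hε
      refine le_of_forall_pos_mul_le_mul_add (d := (n + 1) * C) fun R hR => ?_
      have hball : ∀ x ∈ closedBall 0 R, ‖Y x‖ ≤ ε * R + C := fun x hx => by
        have := mul_le_mul_of_nonneg_left (mem_closedBall_zero_iff.1 hx) hε.le
        have hCx := hC x
        rw [norm_norm] at hCx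
        linarith
      calc R * |c| ≤ (n + 1) * (ε * R + C) := mul_abs_le_of_trace_fderiv_eq hY hdiv hR hball
        _ = R * ((n + 1) * ε) + (n + 1) * C := by ring
    refine abs_eq_zero.1 (le_antisymm (le_of_forall_pos_le_add fun δ hδ => ?_) (abs_nonneg c))
    have := key (δ / (n + 1)) (by positivity)
    rwa [mul_div_cancel₀ _ (by positivity), ← zero_add δ] at this

theorem trace_fderiv_eq_zero_of_isLittleO {E : Type*} [NormedAddCommGroup E] [NormedSpace ℝ E]
    [FiniteDimensional ℝ E] {X : E → E} {c : ℝ}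
    (hX : Differentiable ℝ X) (hdiv : ∀ x, LinearMap.trace ℝ E (fderiv ℝ X x).toLinearMap = c)
    (hgrow : X =o[cocompact E] fun x => ‖x‖) : c = 0 := by
  let e : E ≃L[ℝ] (Fin (Module.finrank ℝ E) → ℝ) :=
    ContinuousLinearEquiv.ofFinrankEq (Module.finrank_fin_fun ℝ).symm
  refine trace_fderiv_eq_zero_of_isLittleO_pi (Y := fun y => e (X (e.symm y)))
    (e.differentiable.comp (hX.comp e.symm.differentiable)) (fun y => ?_) ?_
  · have hY : HasFDerivAt (fun y => e (X (e.symm y)))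
        ((e : E →L[ℝ] _).comp ((fderiv ℝ X (e.symm y)).comp (e.symm : _ →L[ℝ] E))) y :=
      e.hasFDerivAt.comp y ((hX _).hasFDerivAt.comp y e.symm.hasFDerivAt)
    rw [hY.fderiv, ← hdiv (e.symm y), ← LinearMap.trace_conj' _ e.toLinearEquiv]
    rfl
  · have hsymm : (fun y => ‖e.symm y‖) =O[cocompact _] fun y => ‖y‖ :=
      (e.symm.toContinuousLinearMap.isBigO_id (cocompact _)).norm_norm
    exact (e.isBigO_comp _ _).trans_isLittleO
      ((hgrow.comp_tendsto e.symm.toHomeomorph.map_cocompact.le).trans_isBigO hsymm)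

theorem ContDiff.differentiable_gradient {F : Type*} [NormedAddCommGroup F]
    [InnerProductSpace ℝ F] [CompleteSpace F] {f : F → ℝ} (hf : ContDiff ℝ 2 f) :
    Differentiable ℝ (gradient f) :=
  (InnerProductSpace.toDual ℝ F).symm.differentiable.comp
    ((hf.fderiv_right (m := 1) (by norm_num)).differentiable one_ne_zero)

theorem Differentiable.inv_sqrt_one_sub_norm_sq_smul {E F : Type*} [NormedAddCommGroup E]
    [NormedSpace ℝ E] [NormedAddCommGroup F] [InnerProductSpace ℝ F] {g : E → F}
    (hg : Differentiable ℝ g) (hg1 : ∀ x, ‖g x‖ < 1) :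
    Differentiable ℝ fun x => (Real.sqrt (1 - ‖g x‖ ^ 2))⁻¹ • g x := fun x => by
  have hpos : 0 < 1 - ‖g x‖ ^ 2 := by nlinarith [hg1 x, norm_nonneg (g x)]
  exact ((((differentiableAt_const _).sub ((hg x).norm_sq ℝ)).sqrt hpos.ne').inv
    (Real.sqrt_pos.2 hpos).ne').smul (hg x)

/-- Dong's theorem: if 1/√(1-|∇ψ|²) = o(|u|) as |u| → ∞, then the entire space-like CMC
graph has vanishing mean curvature. -/
theorem cmc_vanishing_littleO (n : ℕ) (hn : 0 < n) (H : ℝ)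
    (ψ : EuclideanSpace ℝ (Fin n) → ℝ) (hψ : ContDiff ℝ 2 ψ)
    (hsp : ∀ u, ‖gradient ψ u‖ < 1)
    (hmean : ∀ u, (n : ℝ) * H =
      vdiv (fun v => (Real.sqrt (1 - ‖gradient ψ v‖ ^ 2))⁻¹ • gradient ψ v) u)
    (hgrow : (fun u : EuclideanSpace ℝ (Fin n) => (Real.sqrt (1 - ‖gradient ψ u‖ ^ 2))⁻¹)
      =o[Filter.cocompact (EuclideanSpace ℝ (Fin n))] fun u => ‖u‖) :
    H = 0 := by
  have hX : Differentiable ℝ fun v => (Real.sqrt (1 - ‖gradient ψ v‖ ^ 2))⁻¹ • gradient ψ v :=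
    hψ.differentiable_gradient.inv_sqrt_one_sub_norm_sq_smul hsp
  have hXO : (fun v => (Real.sqrt (1 - ‖gradient ψ v‖ ^ 2))⁻¹ • gradient ψ v)
      =O[cocompact _] fun u => (Real.sqrt (1 - ‖gradient ψ u‖ ^ 2))⁻¹ :=
    IsBigO.of_bound 1 (Eventually.of_forall fun u => by
      rw [norm_smul, one_mul]
      exact mul_le_of_le_one_right (norm_nonneg _) (hsp u).le)
  have hnH : (n : ℝ) * H = 0 :=
    trace_fderiv_eq_zero_of_isLittleO hX (fun u => (hmean u).symm) (hXO.trans_isLittleO hgrow)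
  exact (mul_eq_zero.1 hnH).resolve_left (Nat.cast_ne_zero.2 hn.ne')
end

section
/- Let ψ : ℝⁿ → ℝ be a C² function with |∇ψ| < 1 everywhere whose graph in ℝ^{n+1}_1 has constant mean curvature H, and suppose there exists C < 1 with |∇ψ| ≤ C on ℝⁿ. Then H = 0. -/
open MeasureTheory Metric
open scoped ENNReal

/-!
The equation says that the field `X = ∇ψ / √(1 - |∇ψ|²)` has constant divergence `nH`. Since
`t ↦ t / √(1 - t²)` is increasing, `|∇ψ| ≤ C < 1` bounds `|X|` by `M = C / √(1 - C²)`. By the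
divergence theorem on the cube `[-R, R]ⁿ`, `nH (2R)ⁿ` is the flux of `X` through its `2n` faces,
so `|nH| (2R)ⁿ ≤ 2n M (2R)ⁿ⁻¹`, i.e. `|nH| ≤ n M / R`; letting `R → ∞` gives `H = 0`.
-/

open Set

open InnerProductSpace in
theorem ContDiff.gradient {F : Type*} [NormedAddCommGroup F] [InnerProductSpace ℝ F]
    [CompleteSpace F] {k : WithTop ℕ∞} {ψ : F → ℝ} (hψ : ContDiff ℝ (k + 1) ψ) :
    ContDiff ℝ k (gradient ψ) :=
  (toDual ℝ F).symm.contDiff.comp (hψ.fderiv_right le_rfl)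

theorem ContDiff.inv_sqrt_one_sub_norm_sq_smul {E F : Type*} [NormedAddCommGroup E]
    [NormedSpace ℝ E] [NormedAddCommGroup F] [InnerProductSpace ℝ F] {k : WithTop ℕ∞}
    {G : E → F} (hG : ContDiff ℝ k G) (hG1 : ∀ v, ‖G v‖ < 1) :
    ContDiff ℝ k fun v => (√(1 - ‖G v‖ ^ 2))⁻¹ • G v := by
  have hpos : ∀ v, 0 < 1 - ‖G v‖ ^ 2 := fun v => by
    nlinarith [hG1 v, norm_nonneg (G v)]
  refine ContDiff.smul ?_ hG
  exact ((contDiff_const.sub (hG.norm_sq ℝ)).sqrt fun v => (hpos v).ne').inv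
    fun v => (Real.sqrt_pos.mpr (hpos v)).ne'

lemma norm_inv_sqrt_one_sub_norm_sq_smul_le {E : Type*} [SeminormedAddCommGroup E]
    [NormedSpace ℝ E] {v : E} {C : ℝ} (hv : ‖v‖ ≤ C) (hC : C < 1) :
    ‖(√(1 - ‖v‖ ^ 2))⁻¹ • v‖ ≤ C / √(1 - C ^ 2) := by
  have hC0 : 0 ≤ C := (norm_nonneg v).trans hv
  have hsqrtC : 0 < √(1 - C ^ 2) := Real.sqrt_pos.mpr (by nlinarith)
  have hsqrt : √(1 - C ^ 2) ≤ √(1 - ‖v‖ ^ 2) :=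
    Real.sqrt_le_sqrt (by nlinarith [norm_nonneg v])
  rw [norm_smul, norm_inv, Real.norm_of_nonneg (Real.sqrt_nonneg _), inv_mul_eq_div]
  exact div_le_div₀ hC0 hv hsqrtC hsqrt

lemma vdiv_eq_sum {n : ℕ} (X : EuclideanSpace ℝ (Fin n) → EuclideanSpace ℝ (Fin n))
    (u : EuclideanSpace ℝ (Fin n)) :
    vdiv X u = ∑ i, fderiv ℝ X u (EuclideanSpace.single i 1) i := by
  simp [vdiv, LinearMap.trace_eq_sum_inner _ (EuclideanSpace.basisFun (Fin n) ℝ),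
    EuclideanSpace.inner_single_left]

lemma Real.volume_real_Icc_const_pi {ι : Type*} [Fintype ι] {a b : ℝ} (hab : a ≤ b) :
    volume.real (Icc (fun _ : ι => a) fun _ => b) = (b - a) ^ Fintype.card ι := by
  rw [measureReal_def, Real.volume_Icc_pi_toReal fun _ => hab, Finset.prod_const,
    Finset.card_univ]

lemma eq_zero_of_forall_abs_mul_le {c K : ℝ} (h : ∀ R > 0, |c| * R ≤ K) : c = 0 := by
  by_contra hc
  have hc' : 0 < |c| := abs_pos.mpr hc
  have := h ((|K| + 1) / |c|) (by positivity)
  rw [mul_div_cancel₀ _ hc'.ne'] at this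
  linarith [le_abs_self K]

lemma abs_mul_le_of_divergence_eq_of_norm_le {m : ℕ} {F : (Fin (m + 1) → ℝ) → Fin (m + 1) → ℝ}
    {F' : (Fin (m + 1) → ℝ) → (Fin (m + 1) → ℝ) →L[ℝ] Fin (m + 1) → ℝ} {c M R : ℝ}
    (hF : ∀ x, HasFDerivAt F (F' x) x) (hdiv : ∀ x, ∑ i, F' x (Pi.single i 1) i = c)
    (hM : ∀ x, ‖F x‖ ≤ M) (hR : 0 < R) :
    |c| * R ≤ (m + 1) * M := by
  have hRR : -R ≤ R := by linarith
  have h2R : 0 < 2 * R := by linarith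
  have hflux := integral_divergence_of_hasFDerivAt_off_countable (fun _ => -R) (fun _ => R)
    (fun _ => hRR) F F' ∅ countable_empty
    (fun x _ => (hF x).continuousAt.continuousWithinAt) (fun x _ => hF x)
    (by simpa only [hdiv] using integrableOn_const (μ := volume) isCompact_Icc.measure_lt_top.ne)
  have hside : R - -R = 2 * R := by ring
  simp only [hdiv, setIntegral_const, Real.volume_real_Icc_const_pi hRR, hside, Fintype.card_fin,
    smul_eq_mul] at hflux
  have hface : ∀ (i : Fin (m + 1)) t, ‖∫ x in Icc (fun _ : Fin m => -R) (fun _ => R),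
      F (i.insertNth t x) i‖ ≤ M * (2 * R) ^ m := by
    intro i t
    simpa only [Real.volume_real_Icc_const_pi hRR, hside, Fintype.card_fin] using
      norm_setIntegral_le_of_norm_le_const (μ := volume) (s := Icc (fun _ : Fin m => -R) fun _ => R)
        isCompact_Icc.measure_lt_top
        fun x _ => (norm_le_pi_norm _ i).trans (hM _)
  have hbound : |c| * (2 * R) ^ (m + 1) ≤ ∑ i : Fin (m + 1), (M * (2 * R) ^ m + M * (2 * R) ^ m) :=
    calc |c| * (2 * R) ^ (m + 1) = ‖(2 * R) ^ (m + 1) * c‖ := by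
          rw [Real.norm_eq_abs, abs_mul, abs_of_pos (pow_pos h2R _), mul_comm]
      _ ≤ _ := by
          rw [hflux]
          exact (norm_sum_le _ _).trans
            (Finset.sum_le_sum fun i _ => norm_sub_le_of_le (hface i _) (hface i _))
  rw [Finset.sum_const, Finset.card_univ, Fintype.card_fin, nsmul_eq_mul, pow_succ] at hbound
  have hface_vol : 0 < (2 * R) ^ m := pow_pos h2R _
  push_cast at hbound
  nlinarith

theorem eq_zero_of_vdiv_eq_of_norm_le {n : ℕ} (hn : 0 < n)
    {X : EuclideanSpace ℝ (Fin n) → EuclideanSpace ℝ (Fin n)} {c M : ℝ}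
    (hX : Differentiable ℝ X) (hdiv : ∀ u, vdiv X u = c) (hM : ∀ u, ‖X u‖ ≤ M) : c = 0 := by
  obtain ⟨m, rfl⟩ := Nat.exists_eq_succ_of_ne_zero hn.ne'
  let e := EuclideanSpace.equiv (Fin (m + 1)) ℝ
  refine eq_zero_of_forall_abs_mul_le fun R hR => abs_mul_le_of_divergence_eq_of_norm_le
    (F := fun x => e (X (e.symm x))) (M := M)
    (F' := fun x => (e : _ →L[ℝ] _) ∘L fderiv ℝ X (e.symm x) ∘L (e.symm : _ →L[ℝ] _))
    (fun x => e.hasFDerivAt.comp x ((hX _).hasFDerivAt.comp x e.symm.hasFDerivAt)) (fun x => ?_)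
    (fun x => ?_) hR
  · rw [← hdiv (e.symm x), vdiv_eq_sum]
    rfl
  · exact (pi_norm_le_iff_of_nonneg ((norm_nonneg _).trans (hM 0))).2
      fun i => (PiLp.norm_apply_le _ i).trans (hM _)

theorem cmc_vanishing_uniform_gradient_general (n : ℕ) (hn : 0 < n) (H C : ℝ) (hC : C < 1)
    (ψ : EuclideanSpace ℝ (Fin n) → ℝ) (hψ : ContDiff ℝ 2 ψ)
    (hmean : ∀ u, (n : ℝ) * H =
      vdiv (fun v => (Real.sqrt (1 - ‖gradient ψ v‖ ^ 2))⁻¹ • gradient ψ v) u)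
    (hgrad : ∀ u : EuclideanSpace ℝ (Fin n), ‖gradient ψ u‖ ≤ C) :
    H = 0 := by
  have hX : ContDiff ℝ 1 fun v => (√(1 - ‖gradient ψ v‖ ^ 2))⁻¹ • gradient ψ v :=
    ContDiff.inv_sqrt_one_sub_norm_sq_smul (ContDiff.gradient hψ) fun u => (hgrad u).trans_lt hC
  have hnH : (n : ℝ) * H = 0 :=
    eq_zero_of_vdiv_eq_of_norm_le hn (hX.differentiable one_ne_zero) (fun u => (hmean u).symm)
      fun u => norm_inv_sqrt_one_sub_norm_sq_smul_le (hgrad u) hC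
  exact (mul_eq_zero.mp hnH).resolve_left (Nat.cast_ne_zero.mpr hn.ne')

/-- An entire space-like CMC graph with a uniform gradient bound |∇ψ| ≤ C < 1 has
vanishing mean curvature (Corollary 3.4). -/
theorem cmc_vanishing_uniform_gradient (n : ℕ) (hn : 0 < n) (H C : ℝ) (hC : C < 1)
    (ψ : EuclideanSpace ℝ (Fin n) → ℝ) (hψ : ContDiff ℝ 2 ψ)
    (hsp : ∀ u, ‖gradient ψ u‖ < 1)
    (hmean : ∀ u, (n : ℝ) * H =
      vdiv (fun v => (Real.sqrt (1 - ‖gradient ψ v‖ ^ 2))⁻¹ • gradient ψ v) u)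
    (hgrad : ∀ u : EuclideanSpace ℝ (Fin n), ‖gradient ψ u‖ ≤ C) :
    H = 0 :=
  cmc_vanishing_uniform_gradient_general n hn H C hC ψ hψ hmean hgrad
end
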